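/- If x_ε is an ε-approximate unconstrained minimizer of f_reg(x) := f(x) + 2L · max(0, ‖x − c‖ − r) (i.e., f_reg(x_ε) ≤ inf_x f_reg(x) + ε), then the point z, defined as x_ε if ‖x_ε − c‖ ≤ r and as c + (r/‖x_ε − c‖)(x_ε − c) otherwise, satisfies ‖z − c‖ ≤ r and f(z) ≤ min over {x : ‖x − c‖ ≤ r} of f(x) + ε. -/

import Mathlib

/-!
Radially projecting `x` onto the ball `‖x - c‖ ≤ r` moves it by exactly the penalty
`p x = max 0 (‖x - c‖ - r)`, so the Lipschitz bound gives `f (π x) ≤ f x + L * p x ≤ freg x`.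
As `freg = f` on the ball, `f (π xε) ≤ freg xε ≤ freg x + ε = f x + ε` for every `x` in the ball.
-/

section RadialProj

variable {E : Type*} [NormedAddCommGroup E] [NormedSpace ℝ E]

noncomputable def radialProj (c : E) (r : ℝ) (x : E) : E :=
  if ‖x - c‖ ≤ r then x else c + (r / ‖x - c‖) • (x - c)

lemma norm_radialProj_sub_le {c : E} {r : ℝ} (hr : 0 ≤ r) (x : E) :
    ‖radialProj c r x - c‖ ≤ r := by
  unfold radialProj
  split_ifs with hx
  · exact hx
  · have hd : 0 < ‖x - c‖ := hr.trans_lt (not_le.mp hx)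
    rw [add_sub_cancel_left, norm_smul, Real.norm_of_nonneg (by positivity),
      div_mul_cancel₀ r hd.ne']

lemma norm_radialProj_sub_self {c : E} {r : ℝ} (hr : 0 ≤ r) (x : E) :
    ‖radialProj c r x - x‖ = max 0 (‖x - c‖ - r) := by
  unfold radialProj
  split_ifs with hx
  · rw [sub_self, norm_zero, max_eq_left (sub_nonpos.mpr hx)]
  · have hd : 0 < ‖x - c‖ := hr.trans_lt (not_le.mp hx)
    have hmove : c + (r / ‖x - c‖) • (x - c) - x = (1 - r / ‖x - c‖) • (c - x) := by
      module
    rw [max_eq_right (by linarith [not_le.mp hx]), hmove, norm_smul, norm_sub_rev c x,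
      Real.norm_of_nonneg (by rw [sub_nonneg, div_le_one hd]; exact (not_le.mp hx).le),
      sub_mul, one_mul, div_mul_cancel₀ r hd.ne']

lemma le_add_mul_penalty_radialProj {f : E → ℝ} {L : ℝ}
    (hf : ∀ x y : E, |f x - f y| ≤ L * ‖x - y‖) {c : E} {r : ℝ} (hr : 0 ≤ r) (x : E) :
    f (radialProj c r x) ≤ f x + L * max 0 (‖x - c‖ - r) := by
  have := (abs_le.mp (hf (radialProj c r x) x)).2
  rw [norm_radialProj_sub_self hr] at this
  linarith

end RadialProj

theorem stmt_4_general {E : Type*} [NormedAddCommGroup E] [NormedSpace ℝ E]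
    (f : E → ℝ) (L : ℝ) (hL : 0 < L)
    (hlip : ∀ x y : E, |f x - f y| ≤ L * ‖x - y‖)
    (c : E) (r : ℝ) (hr : 0 < r) (ε : ℝ)
    (freg : E → ℝ)
    (hfreg : ∀ x : E, freg x = f x + 2 * L * max 0 (‖x - c‖ - r))
    (xε : E) (hxε : ∀ x : E, freg xε ≤ freg x + ε)
    (z : E)
    (hz : z = if ‖xε - c‖ ≤ r then xε else c + (r / ‖xε - c‖) • (xε - c)) :
    ‖z - c‖ ≤ r ∧ ∀ x : E, ‖x - c‖ ≤ r → f z ≤ f x + ε := by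
  change z = radialProj c r xε at hz
  subst hz
  refine ⟨norm_radialProj_sub_le hr.le xε, fun x hx => ?_⟩
  have hpen : 0 ≤ L * max 0 (‖xε - c‖ - r) := by positivity
  calc f (radialProj c r xε)
      ≤ f xε + L * max 0 (‖xε - c‖ - r) := le_add_mul_penalty_radialProj hlip hr.le xε
    _ ≤ freg xε := by rw [hfreg]; linarith
    _ ≤ freg x + ε := hxε x
    _ = f x + ε := by rw [hfreg, max_eq_left (sub_nonpos.mpr hx)]; ring

/-- reduction from constrained to unconstrained optimization: an
`ε`-approximate unconstrained minimizer of the regularized function, projected radially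
onto the ball if necessary, is an `ε`-approximate constrained minimizer of `f`. -/
theorem stmt_4 {E : Type*} [NormedAddCommGroup E] [NormedSpace ℝ E]
    (f : E → ℝ) (L : ℝ) (hL : 0 < L)
    (hconv : ConvexOn ℝ Set.univ f)
    (hlip : ∀ x y : E, |f x - f y| ≤ L * ‖x - y‖)
    (c : E) (r : ℝ) (hr : 0 < r) (ε : ℝ) (hε : 0 ≤ ε)
    (freg : E → ℝ)
    (hfreg : ∀ x : E, freg x = f x + 2 * L * max 0 (‖x - c‖ - r))
    (xε : E) (hxε : ∀ x : E, freg xε ≤ freg x + ε)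
    (z : E)
    (hz : z = if ‖xε - c‖ ≤ r then xε else c + (r / ‖xε - c‖) • (xε - c)) :
    ‖z - c‖ ≤ r ∧ ∀ x : E, ‖x - c‖ ≤ r → f z ≤ f x + ε :=
  stmt_4_general f L hL hlip c r hr ε freg hfreg xε hxε z hz
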